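/- arXiv:2108.00542 — 2 statements merged into one kernel-verified Lean document; each statement's English description precedes it below -/
import Mathlib

section
/- If an election profile P is uniquely weighted, then P has exactly one Stable Voting winner, i.e., SV(P) is a singleton. -/
/-- An election profile: a finite set of candidates and, for each voter,
a strict linear order (ballot) on the candidates.  `ballot v a b = true`
means that voter `v` ranks candidate `a` above candidate `b`. -/
structure Profile (C V : Type) [DecidableEq C] [Fintype V] where
  cands : Finset C
  ballot : V → C → C → Bool
  ballot_irrefl : ∀ v a, a ∈ cands → ballot v a a = false
  ballot_asymm_total : ∀ v a b, a ∈ cands → b ∈ cands → a ≠ b →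
    (ballot v a b = true ↔ ¬ ballot v b a = true)
  ballot_trans : ∀ v a b c, a ∈ cands → b ∈ cands → c ∈ cands →
    ballot v a b = true → ballot v b c = true → ballot v a c = true

variable {C V : Type} [DecidableEq C] [Fintype V]

/-- The margin of `a` vs. `b`: the number of voters ranking `a` above `b`
minus the number of voters ranking `b` above `a`. -/
def Profile.margin (P : Profile C V) (a b : C) : ℤ :=
  ((Finset.univ.filter fun v => P.ballot v a b = true).card : ℤ) -
  ((Finset.univ.filter fun v => P.ballot v b a = true).card : ℤ)

/-- The restriction of a profile to a subset `S` of the candidates. -/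
def Profile.restrict (P : Profile C V) (S : Finset C) : Profile C V where
  cands := P.cands ∩ S
  ballot := P.ballot
  ballot_irrefl := fun v a ha => P.ballot_irrefl v a (Finset.mem_inter.mp ha).1
  ballot_asymm_total := fun v a b ha hb => P.ballot_asymm_total v a b
    (Finset.mem_inter.mp ha).1 (Finset.mem_inter.mp hb).1
  ballot_trans := fun v a b c ha hb hc => P.ballot_trans v a b c
    (Finset.mem_inter.mp ha).1 (Finset.mem_inter.mp hb).1 (Finset.mem_inter.mp hc).1

/-- The profile `P₋B` obtained from `P` by removing candidate `b` from all ballots. -/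
def Profile.remove (P : Profile C V) (b : C) : Profile C V :=
  P.restrict (P.cands.erase b)

/-- Auxiliary, fuel-based definition of the Stable Voting winners. -/
def SVaux : ℕ → Profile C V → Set C
  | 0, P => ↑P.cands
  | n + 1, P =>
    if P.cands.card ≤ 1 then ↑P.cands
    else { a | ∃ b ∈ P.cands, b ≠ a ∧ a ∈ SVaux n (P.remove b) ∧
      ∀ x ∈ P.cands, ∀ y ∈ P.cands, x ≠ y → x ∈ SVaux n (P.remove y) →
        P.margin x y ≤ P.margin a b }

/-- The set of Stable Voting winners of a profile.  If there is a single
candidate, that candidate wins; otherwise `a` is a winner iff there is a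
candidate `b ≠ a` such that `a` is a Stable Voting winner after removing `b`
and the margin of `a` vs. `b` is maximal among margins of pairs `(x, y)` of
distinct candidates such that `x` is a Stable Voting winner after removing `y`. -/
def SV (P : Profile C V) : Set C := SVaux P.cands.card P

/-- `a` beats `b` head-to-head: the margin of `a` vs. `b` is positive. -/
def Profile.beats (P : Profile C V) (a b : C) : Prop := 0 < P.margin a b

/-- A Condorcet winner: a candidate beating every other candidate head-to-head. -/
def CondorcetWinner (P : Profile C V) (a : C) : Prop :=
  a ∈ P.cands ∧ ∀ b ∈ P.cands, b ≠ a → P.beats a b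

/-- `S` is a nonempty set of candidates each of whose members beats each
nonmember head-to-head. -/
def Dominant (P : Profile C V) (S : Finset C) : Prop :=
  S ⊆ P.cands ∧ S.Nonempty ∧ ∀ a ∈ S, ∀ b ∈ P.cands, b ∉ S → P.beats a b

/-- `S` is the Smith set of `P`: the smallest nonempty set of candidates each
of whose members beats each nonmember head-to-head. -/
def IsSmith (P : Profile C V) (S : Finset C) : Prop :=
  Dominant P S ∧ ∀ T, Dominant P T → S ⊆ T

/-- A profile is uniquely weighted if distinct ordered pairs of distinct
candidates have distinct margins. -/
def UniquelyWeighted (P : Profile C V) : Prop :=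
  ∀ a b a' b', a ∈ P.cands → b ∈ P.cands → a' ∈ P.cands → b' ∈ P.cands →
    a ≠ b → a' ≠ b' → (a, b) ≠ (a', b') → P.margin a b ≠ P.margin a' b'

/-- `a` is stable for SV in `P`: there is a candidate `b` whom `a` beats
head-to-head such that `a` is a Stable Voting winner in `P₋b`. -/
def StableFor (P : Profile C V) (a : C) : Prop :=
  ∃ b ∈ P.cands, P.beats a b ∧ a ∈ SV (P.remove b)

lemma remove_cands (P : Profile C V) (b : C) :
    (P.remove b).cands = P.cands.erase b :=
  Finset.inter_eq_right.mpr (Finset.erase_subset _ _)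

lemma svaux_subset : ∀ n (P : Profile C V), SVaux n P ⊆ ↑P.cands := by
  intro n
  induction n with
  | zero => intro P a ha; exact ha
  | succ n ih =>
    intro P a ha
    rw [SVaux] at ha
    by_cases hc : P.cands.card ≤ 1
    · rw [if_pos hc] at ha; exact ha
    · rw [if_neg hc] at ha
      obtain ⟨b, hb, hba, haS, _⟩ := ha
      have := ih (P.remove b) haS
      rw [remove_cands] at this
      exact Finset.mem_of_mem_erase this

lemma svaux_nonempty : ∀ n (P : Profile C V), P.cands.card = n → P.cands.Nonempty →
    (SVaux n P).Nonempty := by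
  intro n
  induction n with
  | zero => intro P _ hne; exact ⟨hne.choose, hne.choose_spec⟩
  | succ n ih =>
    intro P hcard hne
    rw [SVaux]
    by_cases hc : P.cands.card ≤ 1
    · rw [if_pos hc]; exact ⟨hne.choose, hne.choose_spec⟩
    · rw [if_neg hc]
      push_neg at hc
      classical
      obtain ⟨b, hb⟩ := hne
      have hrem : (P.remove b).cands.card = n := by
        rw [remove_cands, Finset.card_erase_of_mem hb, hcard]; omega
      have hremne : (P.remove b).cands.Nonempty := by
        rw [remove_cands, ← Finset.card_pos, Finset.card_erase_of_mem hb, hcard]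
        omega
      set T := (P.cands ×ˢ P.cands).filter
        (fun p => p.1 ≠ p.2 ∧ p.1 ∈ SVaux n (P.remove p.2)) with hT
      have hTne : T.Nonempty := by
        obtain ⟨x, hx⟩ := ih (P.remove b) hrem hremne
        have hxc := svaux_subset n (P.remove b) hx
        rw [remove_cands] at hxc
        refine ⟨(x, b), ?_⟩
        simp only [hT, Finset.mem_filter, Finset.mem_product]
        exact ⟨⟨Finset.mem_of_mem_erase hxc, hb⟩, Finset.ne_of_mem_erase hxc, hx⟩
      obtain ⟨p, hp, hmax⟩ := T.exists_max_image (fun p => P.margin p.1 p.2) hTne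
      simp only [hT, Finset.mem_filter, Finset.mem_product] at hp
      refine ⟨p.1, p.2, hp.1.2, hp.2.1.symm, hp.2.2, ?_⟩
      intro x hx y hy hxy hxS
      exact hmax (x, y) (by
        simp only [hT, Finset.mem_filter, Finset.mem_product]
        exact ⟨⟨hx, hy⟩, hxy, hxS⟩)

/-- A uniquely weighted profile has exactly one Stable Voting
winner. -/
theorem sv_unique_of_uniquelyWeighted (P : Profile C V)
    (h : P.cands.Nonempty) (hu : UniquelyWeighted P) :
    ∃ A, SV P = {A} := by
  classical
  by_cases hc : P.cands.card ≤ 1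
  · have h1 : P.cands.card = 1 := by
      have := Finset.card_pos.mpr h; omega
    obtain ⟨A, hA⟩ := Finset.card_eq_one.mp h1
    refine ⟨A, ?_⟩
    rw [SV, h1, SVaux, if_pos (by rw [h1]), hA]
    simp
  · push_neg at hc
    obtain ⟨m, hm⟩ : ∃ m, P.cands.card = m + 1 := ⟨P.cands.card - 1, by omega⟩
    rw [SV, hm, SVaux, if_neg (by omega)]
    set T := (P.cands ×ˢ P.cands).filter
      (fun p => p.1 ≠ p.2 ∧ p.1 ∈ SVaux m (P.remove p.2)) with hT
    have hTmem : ∀ p : C × C, p ∈ T ↔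
        p.1 ∈ P.cands ∧ p.2 ∈ P.cands ∧ p.1 ≠ p.2 ∧ p.1 ∈ SVaux m (P.remove p.2) := by
      intro p
      simp only [hT, Finset.mem_filter, Finset.mem_product, and_assoc]
    have hTne : T.Nonempty := by
      obtain ⟨b, hb⟩ := h
      have hrem : (P.remove b).cands.card = m := by
        rw [remove_cands, Finset.card_erase_of_mem hb, hm]; omega
      have hremne : (P.remove b).cands.Nonempty := by
        rw [remove_cands, ← Finset.card_pos, Finset.card_erase_of_mem hb, hm]
        omega
      obtain ⟨x, hx⟩ := svaux_nonempty m (P.remove b) hrem hremne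
      have hxc := svaux_subset m (P.remove b) hx
      rw [remove_cands] at hxc
      refine ⟨(x, b), (hTmem _).mpr ?_⟩
      exact ⟨Finset.mem_of_mem_erase hxc, hb, Finset.ne_of_mem_erase hxc, hx⟩
    obtain ⟨p, hp, hmax⟩ := T.exists_max_image (fun p => P.margin p.1 p.2) hTne
    rw [hTmem] at hp
    obtain ⟨hp1, hp2, hp12, hpS⟩ := hp
    refine ⟨p.1, ?_⟩
    ext a
    constructor
    · intro ha
      obtain ⟨b', hb', hb'a, haS, hge⟩ := ha
      have hac : a ∈ P.cands := by
        have := svaux_subset m (P.remove b') haS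
        rw [remove_cands] at this
        exact Finset.mem_of_mem_erase this
      have hab' : a ≠ b' := by
        have := svaux_subset m (P.remove b') haS
        rw [remove_cands] at this
        exact Finset.ne_of_mem_erase this
      have h1 : P.margin p.1 p.2 ≤ P.margin a b' := hge p.1 hp1 p.2 hp2 hp12 hpS
      have h2 : P.margin a b' ≤ P.margin p.1 p.2 :=
        hmax (a, b') ((hTmem _).mpr ⟨hac, hb', hab', haS⟩)
      have heq : P.margin a b' = P.margin p.1 p.2 := le_antisymm h2 h1
      by_contra hne
      have hpair : (a, b') ≠ (p.1, p.2) := by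
        intro hcon
        exact hne (congrArg Prod.fst hcon)
      exact hu a b' p.1 p.2 hac hb' hp1 hp2 hab' hp12 hpair heq
    · intro ha
      rw [Set.mem_singleton_iff] at ha
      subst ha
      refine ⟨p.2, hp2, hp12.symm, hpS, ?_⟩
      intro x hx y hy hxy hxS
      exact hmax (x, y) ((hTmem _).mpr ⟨hx, hy, hxy, hxS⟩)
end

section
/- Stable Voting satisfies the Smith criterion: if A is a Stable Voting winner in an election profile P, then A belongs to the Smith set of P. -/
variable {C V : Type} [DecidableEq C] [Fintype V]

lemma remove_margin (P : Profile C V) (b x y : C) :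
    (P.remove b).margin x y = P.margin x y := rfl

lemma margin_antisymm (P : Profile C V) (a b : C) :
    P.margin a b = - P.margin b a := by
  simp [Profile.margin]

lemma svaux_stable : ∀ n (P : Profile C V), P.cands.card ≤ n →
    SVaux (n+1) P = SVaux n P := by
  intro n
  induction n with
  | zero =>
      intro P h
      show SVaux (0+1) P = SVaux 0 P
      simp only [SVaux]
      rw [if_pos (show P.cands.card ≤ 1 by omega)]
  | succ n ih =>
      intro P h
      by_cases h1 : P.cands.card ≤ 1
      · rw [SVaux, if_pos h1, SVaux, if_pos h1]
      · rw [SVaux, if_neg h1]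
        conv_rhs => rw [SVaux, if_neg h1]
        have key : ∀ y ∈ P.cands, SVaux (n+1) (P.remove y) = SVaux n (P.remove y) := by
          intro y hy
          apply ih
          rw [remove_cands, Finset.card_erase_of_mem hy]
          omega
        ext a
        simp only [Set.mem_setOf_eq]
        constructor
        · rintro ⟨b, hb, hba, ha, hmax⟩
          exact ⟨b, hb, hba, (key b hb) ▸ ha,
            fun x hx y hy hxy hmem => hmax x hx y hy hxy ((key y hy) ▸ hmem)⟩
        · rintro ⟨b, hb, hba, ha, hmax⟩
          exact ⟨b, hb, hba, (key b hb) ▸ ha,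
            fun x hx y hy hxy hmem => hmax x hx y hy hxy ((key y hy) ▸ hmem)⟩

lemma svaux_eq_sv : ∀ n (P : Profile C V), P.cands.card ≤ n →
    SVaux n P = SV P := by
  intro n
  induction n with
  | zero =>
      intro P h
      rw [SV, Nat.le_zero.mp h]
  | succ n ih =>
      intro P h
      rcases Nat.lt_or_ge P.cands.card (n+1) with h' | h'
      · rw [svaux_stable n P (by omega), ih P (by omega)]
      · rw [SV, Nat.le_antisymm h h']

lemma sv_nonempty : ∀ n (P : Profile C V), P.cands.card ≤ n →
    P.cands.Nonempty → (SV P).Nonempty := by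
  intro n
  induction n with
  | zero =>
      intro P h hne
      exact absurd (Finset.card_pos.mpr hne) (by omega)
  | succ n ih =>
      intro P h hne
      classical
      by_cases h1 : P.cands.card ≤ 1
      · have hc1 : P.cands.card = 1 := le_antisymm h1 (Finset.card_pos.mpr hne)
        obtain ⟨c, hc⟩ := hne
        refine ⟨c, ?_⟩
        rw [SV, hc1]
        show c ∈ SVaux (0+1) P
        rw [SVaux, if_pos (show P.cands.card ≤ 1 by omega)]
        exact hc
      · push_neg at h1
        obtain ⟨k, hk⟩ : ∃ k, P.cands.card = k + 1 := ⟨P.cands.card - 1, by omega⟩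
        have hk1 : 1 ≤ k := by omega
        -- the finset of admissible pairs
        set pairs : Finset (C × C) :=
          (P.cands ×ˢ P.cands).filter
            (fun p => p.1 ≠ p.2 ∧ p.1 ∈ SVaux k (P.remove p.2)) with hpairs
        have hremcard : ∀ y ∈ P.cands, (P.remove y).cands.card = k := by
          intro y hy
          rw [remove_cands, Finset.card_erase_of_mem hy, hk]
          omega
        have hpairs_ne : pairs.Nonempty := by
          obtain ⟨y, hy⟩ := hne
          have hrne : (P.remove y).cands.Nonempty := by
            rw [← Finset.card_pos, hremcard y hy]; omega
          obtain ⟨x, hx⟩ := ih (P.remove y) (by rw [hremcard y hy]; omega) hrne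
          have hx' : x ∈ SVaux k (P.remove y) := by
            rw [svaux_eq_sv k (P.remove y) (le_of_eq (hremcard y hy))]
            exact hx
          have hxc : x ∈ (P.remove y).cands := svaux_subset _ _ hx'
          rw [remove_cands] at hxc
          exact ⟨(x, y), by
            simp only [hpairs, Finset.mem_filter, Finset.mem_product]
            exact ⟨⟨Finset.mem_of_mem_erase hxc, hy⟩, Finset.ne_of_mem_erase hxc, hx'⟩⟩
        obtain ⟨p, hp, hpmax⟩ :=
          Finset.exists_max_image pairs (fun p => P.margin p.1 p.2) hpairs_ne
        simp only [hpairs, Finset.mem_filter, Finset.mem_product] at hp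
        obtain ⟨⟨hp1, hp2⟩, hpne, hpsv⟩ := hp
        refine ⟨p.1, ?_⟩
        rw [SV, hk, SVaux, if_neg (by omega)]
        refine ⟨p.2, hp2, hpne.symm, hpsv, ?_⟩
        intro x hx y hy hxy hmem
        exact hpmax (x, y) (by
          simp only [hpairs, Finset.mem_filter, Finset.mem_product]
          exact ⟨⟨hx, hy⟩, hxy, hmem⟩)

lemma dominant_remove (P : Profile C V) (T : Finset C) (b : C)
    (hT : Dominant P T) (hb : b ∉ T) : Dominant (P.remove b) T := by
  obtain ⟨hsub, hne, hbeats⟩ := hT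
  refine ⟨?_, hne, ?_⟩
  · intro t ht
    rw [remove_cands]
    exact Finset.mem_erase.mpr ⟨fun h => hb (h ▸ ht), hsub ht⟩
  · intro a ha c hc hcT
    rw [remove_cands] at hc
    exact hbeats a ha c (Finset.mem_of_mem_erase hc) hcT

lemma sv_dominant : ∀ n (P : Profile C V) (T : Finset C), P.cands.card ≤ n →
    Dominant P T → ∀ a ∈ SV P, a ∈ T := by
  intro n
  induction n with
  | zero =>
      intro P T h hT a ha
      have : a ∈ P.cands := svaux_subset _ _ ha
      have := Finset.card_pos.mpr ⟨a, this⟩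
      omega
  | succ n ih =>
      intro P T h hT A hA
      have hAc : A ∈ P.cands := svaux_subset _ _ hA
      by_cases h1 : P.cands.card ≤ 1
      · obtain ⟨t, ht⟩ := hT.2.1
        have := Finset.card_le_one.mp h1 A hAc t (hT.1 ht)
        exact this ▸ ht
      · push_neg at h1
        obtain ⟨k, hk⟩ : ∃ k, P.cands.card = k + 1 := ⟨P.cands.card - 1, by omega⟩
        have hremcard : ∀ y ∈ P.cands, (P.remove y).cands.card = k := by
          intro y hy
          rw [remove_cands, Finset.card_erase_of_mem hy, hk]
          omega
        rw [SV, hk, SVaux, if_neg (by omega)] at hA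
        obtain ⟨b, hb, hbA, hAsv, hmax⟩ := hA
        have hAsv' : A ∈ SV (P.remove b) := by
          rw [← svaux_eq_sv k (P.remove b) (le_of_eq (hremcard b hb))]
          exact hAsv
        by_cases hbT : b ∈ T
        · -- show A ∈ T by contradiction
          by_contra hAT
          have hmAb : P.margin A b < 0 := by
            have : P.beats b A := hT.2.2 b hbT A hAc hAT
            rw [margin_antisymm]
            unfold Profile.beats at this
            omega
          -- pick an SV winner of P with A removed
          have hrcard : (P.remove A).cands.card = k := hremcard A hAc
          have hrne : (P.remove A).cands.Nonempty := by
            rw [← Finset.card_pos, hrcard]; omega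
          obtain ⟨x, hx⟩ := sv_nonempty n (P.remove A) (by omega) hrne
          have hxT : x ∈ T :=
            ih (P.remove A) T (by omega)
              (dominant_remove P T A hT hAT) x hx
          have hxc : x ∈ (P.remove A).cands := svaux_subset _ _ hx
          rw [remove_cands] at hxc
          have hxA : x ≠ A := Finset.ne_of_mem_erase hxc
          have hbeats : P.beats x A := hT.2.2 x hxT A hAc hAT
          have hx' : x ∈ SVaux k (P.remove A) := by
            rw [svaux_eq_sv k (P.remove A) (le_of_eq hrcard)]
            exact hx
          have := hmax x (Finset.mem_of_mem_erase hxc) A hAc hxA hx'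
          unfold Profile.beats at hbeats
          omega
        · exact ih (P.remove b) T
            (by rw [hremcard b hb]; omega)
            (dominant_remove P T b hT hbT) A hAsv'

/-- Stable Voting satisfies the Smith criterion: every Stable
Voting winner belongs to the Smith set. -/
theorem sv_smith_criterion (P : Profile C V) (S : Finset C) (A : C)
    (hS : IsSmith P S) (hA : A ∈ SV P) :
    A ∈ S :=
  sv_dominant P.cands.card P S le_rfl hS.1 A hA
end
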